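/- arXiv:1805.11250 — 5 statements merged into one kernel-verified Lean document; each statement's English description precedes it below -/
import Mathlib

section
/- Let N be a positive integer, d : Fin N → ℝ with 0 ≤ d_j < 1 for all j, and f : ℝ → ℝ a function with 0 ≤ f(x) < 1 for all x ∈ [0,1). Then the vector (1/√N) · Σ_j e_j ⊗ (f(d_j) · f_0 + √(1 − f(d_j)²) · f_1) in (EuclideanSpace ℂ (Fin N)) ⊗ ℂ² is a unit vector, the squared norm of its f_0-ancilla component equals (1/N) · Σ_j f(d_j)², and if Σ_j f(d_j)² > 0 the normalized f_0-component equals (Σ_j f(d_j)²)^{−1/2} · Σ_j f(d_j) · e_j ⊗ f_0. (This is the success probability and output state of the generalized QDAC of Corollary 1.1.) -/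
open scoped BigOperators

noncomputable section

/-- Concrete realization of the Hilbert-space tensor product of two Euclidean spaces:
`(tp x y) (i, k) = x i * y k`.  The `L²` inner product on `EuclideanSpace ℂ (ι × κ)` is
exactly the induced inner product `⟪a ⊗ b, c ⊗ d⟫ = ⟪a, c⟫ * ⟪b, d⟫`. -/
def tp {ι κ : Type*} [Fintype ι] [Fintype κ]
    (x : EuclideanSpace ℂ ι) (y : EuclideanSpace ℂ κ) : EuclideanSpace ℂ (ι × κ) :=
  (WithLp.equiv 2 ((ι × κ) → ℂ)).symm fun p => x p.1 * y p.2

/-- The standard orthonormal basis vector `e_j` of `EuclideanSpace ℂ (Fin N)`. -/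
def e {N : ℕ} (j : Fin N) : EuclideanSpace ℂ (Fin N) := EuclideanSpace.single j 1

/-- The standard orthonormal basis vector `f_b` of `ℂ² = EuclideanSpace ℂ (Fin 2)`. -/
def f (b : Fin 2) : EuclideanSpace ℂ (Fin 2) := EuclideanSpace.single b 1

/-!
Since `⟪a ⊗ b, c ⊗ d⟫ = ⟪a, c⟫ ⟪b, d⟫`, the vectors `e_j ⊗ w_j` are orthonormal as soon as every
`w_j` is a unit vector, so both norms are Parseval sums: `Σ_j 1 = N` for the full state, because
`0 ≤ f(d_j) < 1` makes each ancilla state `f(d_j) f₀ + √(1 - f(d_j)²) f₁` a unit vector, and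
`Σ_j f(d_j)²` for the `f₀`-component. Normalizing ignores the positive factor `1/√N`.
-/

open scoped InnerProductSpace

theorem inner_tp_tp {ι κ : Type*} [Fintype ι] [Fintype κ] (a c : EuclideanSpace ℂ ι)
    (b d : EuclideanSpace ℂ κ) : ⟪tp a b, tp c d⟫_ℂ = ⟪a, c⟫_ℂ * ⟪b, d⟫_ℂ := by
  simp only [PiLp.inner_apply, tp, WithLp.equiv_symm_apply, Fintype.sum_prod_type,
    Finset.sum_mul_sum, RCLike.inner_apply, map_mul]
  exact Finset.sum_congr rfl fun _ _ => Finset.sum_congr rfl fun _ _ => by ring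

theorem orthonormal_tp {ι κ μ : Type*} [Fintype κ] [Fintype μ] {v : ι → EuclideanSpace ℂ κ}
    (hv : Orthonormal ℂ v) {w : ι → EuclideanSpace ℂ μ} (hw : ∀ i, ‖w i‖ = 1) :
    Orthonormal ℂ fun i => tp (v i) (w i) := by
  classical
  rw [orthonormal_iff_ite] at hv ⊢
  intro i j
  rw [inner_tp_tp, hv]
  split_ifs with h
  · subst h
    simp [inner_self_eq_norm_sq_to_K, hw]
  · rw [zero_mul]

theorem Orthonormal.norm_sum_smul_sq {𝕜 E ι : Type*} [RCLike 𝕜] [NormedAddCommGroup E]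
    [InnerProductSpace 𝕜 E] {v : ι → E} (hv : Orthonormal 𝕜 v) (l : ι → 𝕜) (s : Finset ι) :
    ‖∑ i ∈ s, l i • v i‖ ^ 2 = ∑ i ∈ s, ‖l i‖ ^ 2 := by
  apply RCLike.ofReal_injective (K := 𝕜)
  push_cast
  rw [← inner_self_eq_norm_sq_to_K, hv.inner_sum]
  simp only [RCLike.conj_mul]

theorem norm_ofReal_smul_f_zero_add_sqrt_smul_f_one {a : ℝ} (ha : |a| ≤ 1) :
    ‖(a : ℂ) • f 0 + ((Real.sqrt (1 - a ^ 2) : ℝ) : ℂ) • f 1‖ = 1 := by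
  have h : 0 ≤ 1 - a ^ 2 := sub_nonneg.2 ((sq_le_one_iff_abs_le_one a).2 ha)
  rw [EuclideanSpace.norm_eq, Fin.sum_univ_two]
  simp [f, Real.sq_sqrt h]

theorem inv_norm_ofReal_smul_smul {E : Type*} [NormedAddCommGroup E] [NormedSpace ℂ E] {r : ℝ}
    (hr : 0 < r) (x : E) : ‖(r : ℂ) • x‖⁻¹ • ((r : ℂ) • x) = ‖x‖⁻¹ • x := by
  rw [Complex.coe_smul, norm_smul, Real.norm_of_nonneg hr.le, smul_smul, mul_inv, mul_right_comm,
    inv_mul_cancel₀ hr.ne', one_mul]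

/-- **Generalized QDAC (Corollary 1.1).**  For data `0 ≤ d_j < 1` and a function
`f : ℝ → ℝ` with `0 ≤ f(x) < 1` on `[0,1)`, the state
`(1/√N) Σ_j e_j ⊗ (f(d_j) f₀ + √(1 - f(d_j)²) f₁)` is a unit vector, the squared norm of
its `f₀`-ancilla component equals `(1/N) Σ_j f(d_j)²`, and whenever `Σ_j f(d_j)² > 0` the
normalized `f₀`-component equals `(Σ_j f(d_j)²)^(-1/2) Σ_j f(d_j) e_j ⊗ f₀`. -/
theorem generalized_qdac (N : ℕ) (hN : 0 < N) (d : Fin N → ℝ)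
    (hd : ∀ j, 0 ≤ d j ∧ d j < 1) (g : ℝ → ℝ)
    (hg : ∀ x ∈ Set.Ico (0 : ℝ) 1, 0 ≤ g x ∧ g x < 1) :
    ‖((1 / Real.sqrt N : ℝ) : ℂ) • ∑ j : Fin N,
        tp (e j) ((g (d j) : ℂ) • f 0 + ((Real.sqrt (1 - g (d j) ^ 2) : ℝ) : ℂ) • f 1)‖ = 1 ∧
    ‖((1 / Real.sqrt N : ℝ) : ℂ) • ∑ j : Fin N, (g (d j) : ℂ) • tp (e j) (f 0)‖ ^ 2
      = (1 / N) * ∑ j : Fin N, g (d j) ^ 2 ∧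
    (0 < ∑ j : Fin N, g (d j) ^ 2 →
      ‖((1 / Real.sqrt N : ℝ) : ℂ) • ∑ j : Fin N, (g (d j) : ℂ) • tp (e j) (f 0)‖⁻¹ •
          (((1 / Real.sqrt N : ℝ) : ℂ) • ∑ j : Fin N, (g (d j) : ℂ) • tp (e j) (f 0))
        = (((∑ j : Fin N, g (d j) ^ 2) ^ (-(1 / 2) : ℝ) : ℝ) : ℂ) •
            ∑ j : Fin N, (g (d j) : ℂ) • tp (e j) (f 0)) := by
  have he : Orthonormal ℂ (e : Fin N → EuclideanSpace ℂ (Fin N)) :=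
    EuclideanSpace.orthonormal_single
  have hgd (j : Fin N) : |g (d j)| ≤ 1 := by
    obtain ⟨hg0, hg1⟩ := hg (d j) (hd j)
    exact (abs_of_nonneg hg0).trans_le hg1.le
  have hstate := (orthonormal_tp he fun j => norm_ofReal_smul_f_zero_add_sqrt_smul_f_one (hgd j)
    ).norm_sum_smul_sq (fun _ => 1) Finset.univ
  simp only [one_smul, norm_one, one_pow, Finset.sum_const, Finset.card_univ, Fintype.card_fin,
    nsmul_eq_mul, mul_one] at hstate
  have hsucc := (orthonormal_tp (w := fun _ => f 0) he fun _ => by simp [f]).norm_sum_smul_sq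
    (fun j => (g (d j) : ℂ)) Finset.univ
  simp only [Complex.norm_real, Real.norm_eq_abs, sq_abs] at hsucc
  have hc : 0 < 1 / Real.sqrt N := by positivity
  refine ⟨?_, ?_, fun _ => ?_⟩
  · rw [norm_smul, Complex.norm_real, Real.norm_of_nonneg hc.le, ← Real.sqrt_sq (norm_nonneg _),
      hstate]
    field_simp
  · rw [norm_smul, Complex.norm_real, Real.norm_of_nonneg hc.le, mul_pow, hsucc, div_pow,
      Real.sq_sqrt (Nat.cast_nonneg N), one_pow]
  · rw [inv_norm_ofReal_smul_smul hc, ← Real.sqrt_sq (norm_nonneg _), hsucc, Real.sqrt_eq_rpow,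
      ← Real.rpow_neg (Finset.sum_nonneg fun j _ => sq_nonneg _), Complex.coe_smul]
end
end

section
/- Let N be a positive integer, let c ∈ EuclideanSpace ℂ (Fin N) be a unit vector with coordinates c_j, and fix k ∈ Fin N. Define r_k = |c_k|. Then ‖(1/2)(c ⊗ e_k + e_k ⊗ c)‖ = √((1 + r_k²)/2) and ‖(1/2)(c ⊗ e_k − e_k ⊗ c)‖ = √((1 − r_k²)/2). (These are the coefficients α_k and β_k appearing in the swap-test decomposition of the abs-QADC state |Ψ_k⟩ in the Appendix.) -/
open scoped BigOperators

noncomputable section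

open scoped InnerProductSpace ComplexInnerProductSpace

section UnitVectors

variable {𝕜 E : Type*} [RCLike 𝕜] [NormedAddCommGroup E] [InnerProductSpace 𝕜 E]

theorem norm_half_smul_add_of_norm_eq_one {u v : E} (hu : ‖u‖ = 1) (hv : ‖v‖ = 1) :
    ‖(1 / 2 : 𝕜) • (u + v)‖ = √((1 + RCLike.re ⟪u, v⟫_𝕜) / 2) := by
  rw [← Real.sqrt_sq (norm_nonneg ((1 / 2 : 𝕜) • (u + v)))]
  congr 1
  rw [norm_smul, mul_pow, norm_add_sq (𝕜 := 𝕜), hu, hv]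
  norm_num
  ring

theorem norm_half_smul_sub_of_norm_eq_one {u v : E} (hu : ‖u‖ = 1) (hv : ‖v‖ = 1) :
    ‖(1 / 2 : 𝕜) • (u - v)‖ = √((1 - RCLike.re ⟪u, v⟫_𝕜) / 2) := by
  rw [← Real.sqrt_sq (norm_nonneg ((1 / 2 : 𝕜) • (u - v)))]
  congr 1
  rw [norm_smul, mul_pow, norm_sub_sq (𝕜 := 𝕜), hu, hv]
  norm_num
  ring

end UnitVectors

section TensorProduct

variable {ι κ : Type*} [Fintype ι] [Fintype κ]

theorem inner_tp (a c : EuclideanSpace ℂ ι) (b d : EuclideanSpace ℂ κ) :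
    ⟪tp a b, tp c d⟫ = ⟪a, c⟫ * ⟪b, d⟫ := by
  simp only [tp, PiLp.inner_apply, RCLike.inner_apply, WithLp.equiv_symm_apply,
    Fintype.sum_prod_type, map_mul, Finset.sum_mul_sum]
  exact Finset.sum_congr rfl fun i _ => Finset.sum_congr rfl fun j _ => by ring

theorem norm_tp (a : EuclideanSpace ℂ ι) (b : EuclideanSpace ℂ κ) :
    ‖tp a b‖ = ‖a‖ * ‖b‖ := by
  rw [norm_eq_sqrt_re_inner (𝕜 := ℂ), inner_tp, inner_self_eq_norm_sq_to_K,
    inner_self_eq_norm_sq_to_K, ← RCLike.ofReal_pow, ← RCLike.ofReal_pow, ← RCLike.ofReal_mul,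
    RCLike.ofReal_re, ← mul_pow, Real.sqrt_sq (by positivity)]

theorem re_inner_tp_tp_swap (a b : EuclideanSpace ℂ ι) :
    RCLike.re ⟪tp a b, tp b a⟫ = ‖⟪b, a⟫‖ ^ 2 := by
  rw [inner_tp, ← inner_conj_symm a b, RCLike.conj_mul, ← RCLike.ofReal_pow, RCLike.ofReal_re]

end TensorProduct

theorem abs_qadc_swap_test_coefficients_general (N : ℕ)
    (c : EuclideanSpace ℂ (Fin N)) (hc : ‖c‖ = 1) (k : Fin N) :
    ‖(1 / 2 : ℂ) • (tp c (e k) + tp (e k) c)‖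
        = Real.sqrt ((1 + ‖c k‖ ^ 2) / 2) ∧
    ‖(1 / 2 : ℂ) • (tp c (e k) - tp (e k) c)‖
        = Real.sqrt ((1 - ‖c k‖ ^ 2) / 2) := by
  have hek : ‖e k‖ = 1 := by simp [e]
  have hu : ‖tp c (e k)‖ = 1 := by rw [norm_tp, hc, hek, one_mul]
  have hv : ‖tp (e k) c‖ = 1 := by rw [norm_tp, hc, hek, one_mul]
  have hre : RCLike.re ⟪tp c (e k), tp (e k) c⟫ = ‖c k‖ ^ 2 := by
    rw [re_inner_tp_tp_swap, e, EuclideanSpace.inner_single_left, map_one, one_mul]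
  rw [norm_half_smul_add_of_norm_eq_one hu hv, norm_half_smul_sub_of_norm_eq_one hu hv, hre]
  exact ⟨rfl, rfl⟩

/-- **Swap-test coefficients `α_k`, `β_k` of the abs-QADC state (Appendix).**  For a unit
vector `c` with coordinates `c_j` and `r_k = |c_k|`,
`‖(1/2)(c ⊗ e_k + e_k ⊗ c)‖ = √((1 + r_k²)/2)` and
`‖(1/2)(c ⊗ e_k - e_k ⊗ c)‖ = √((1 - r_k²)/2)`. -/
theorem abs_qadc_swap_test_coefficients (N : ℕ) (hN : 0 < N)
    (c : EuclideanSpace ℂ (Fin N)) (hc : ‖c‖ = 1) (k : Fin N) :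
    ‖(1 / 2 : ℂ) • (tp c (e k) + tp (e k) c)‖
        = Real.sqrt ((1 + ‖c k‖ ^ 2) / 2) ∧
    ‖(1 / 2 : ℂ) • (tp c (e k) - tp (e k) c)‖
        = Real.sqrt ((1 - ‖c k‖ ^ 2) / 2) :=
  abs_qadc_swap_test_coefficients_general N c hc k
end
end

section
/- Let N be a positive integer, let ψ ∈ EuclideanSpace ℂ (Fin N) be a unit vector with coordinates c_j = ⟨e_j, ψ⟩, and fix k ∈ Fin N. Then ‖(1/2)((−i)·ψ + e_k)‖² = (1 + Im(c_k))/2 and ‖(1/2)((−i)·ψ − e_k)‖² = (1 − Im(c_k))/2. (This is the modified Hadamard-test identity underlying the imag-QADC algorithm: the branch amplitudes encode the imaginary part of the amplitude c_k.) -/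
noncomputable section

/-- **Modified Hadamard-test identity for imag-QADC.**  For a unit vector `ψ` with
coordinates `c_j = ⟪e_j, ψ⟫` and any `k`, `‖(1/2)((-i)ψ + e_k)‖² = (1 + Im c_k)/2` and
`‖(1/2)((-i)ψ - e_k)‖² = (1 - Im c_k)/2`. -/
theorem imag_qadc_hadamard_test (N : ℕ) (hN : 0 < N)
    (ψ : EuclideanSpace ℂ (Fin N)) (hψ : ‖ψ‖ = 1) (k : Fin N) :
    ‖(1 / 2 : ℂ) • ((-Complex.I) • ψ + e k)‖ ^ 2 = (1 + (inner ℂ (e k) ψ : ℂ).im) / 2 ∧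
    ‖(1 / 2 : ℂ) • ((-Complex.I) • ψ - e k)‖ ^ 2 = (1 - (inner ℂ (e k) ψ : ℂ).im) / 2 := by
  have hek : ‖e k‖ = 1 := by
    simp [e, EuclideanSpace.norm_single]
  have hx : ‖(-Complex.I) • ψ‖ = 1 := by
    rw [norm_smul]; simp [hψ]
  have hre : Complex.re (inner ℂ ((-Complex.I) • ψ) (e k)) = (inner ℂ (e k) ψ : ℂ).im := by
    rw [inner_smul_left]
    rw [← inner_conj_symm (e k) ψ]
    simp [Complex.ext_iff]
    rw [← inner_conj_symm ψ (e k), Complex.conj_im, neg_neg]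
  constructor
  · rw [norm_smul, mul_pow, @norm_add_sq ℂ, RCLike.re_to_complex]
    rw [hre, hx, hek]
    simp
    ring
  · rw [norm_smul, mul_pow, @norm_sub_sq ℂ, RCLike.re_to_complex]
    rw [hre, hx, hek]
    simp
    ring
end
end

section
/- Let θ ∈ ℝ, let ψ = (sin(πθ), cos(πθ))ᵀ ∈ ℂ², let Z = diag(1, −1), and let G = (I − 2·ψψ†)·Z. Then the unit vectors v₊ = (1/√2)·(1, i)ᵀ and v₋ = (1/√2)·(1, −i)ᵀ are eigenvectors of G with eigenvalues e^{2πiθ} and e^{−2πiθ} respectively: G·v₊ = e^{2πiθ}·v₊ and G·v₋ = e^{−2πiθ}·v₋. (These are the eigenvalues and eigenstates of the operator G̃_k computed in the Appendix, which the QADC phase estimation estimates.) -/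
/-!
Both `I - 2ψψ†` and `Z` are reflections of the real plane (`ψ` is a real unit vector), so their
product is a rotation, by twice the angle `πθ` between their axes. Every real plane rotation
`[[cos x, sin x], [-sin x, cos x]]` has the eigenvectors `(1, ±i)`, with eigenvalues `e^{±ix}`.
-/

open Matrix Real

noncomputable section

def rotationMatrix (x : ℂ) : Matrix (Fin 2) (Fin 2) ℂ :=
  !![Complex.cos x, Complex.sin x; -Complex.sin x, Complex.cos x]

lemma rotationMatrix_mulVec_one_I (x : ℂ) :
    rotationMatrix x *ᵥ ![1, Complex.I] = Complex.exp (x * Complex.I) • ![1, Complex.I] := by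
  rw [Complex.exp_mul_I]
  ext i
  fin_cases i <;> simp [rotationMatrix]
  · ring
  · linear_combination (-Complex.sin x) * Complex.I_sq

lemma rotationMatrix_mulVec_one_neg_I (x : ℂ) :
    rotationMatrix x *ᵥ ![1, -Complex.I] = Complex.exp (-(x * Complex.I)) • ![1, -Complex.I] := by
  rw [← neg_mul, Complex.exp_mul_I, Complex.cos_neg, Complex.sin_neg]
  ext i
  fin_cases i <;> simp [rotationMatrix]
  · ring
  · linear_combination (-Complex.sin x) * Complex.I_sq

lemma reflection_mul_pauliZ (a : ℝ) :
    ((1 : Matrix (Fin 2) (Fin 2) ℂ)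
        - (2 : ℂ) • vecMulVec ![(Real.sin a : ℂ), (Real.cos a : ℂ)]
            (star ![(Real.sin a : ℂ), (Real.cos a : ℂ)])) * !![1, 0; 0, -1]
      = rotationMatrix (2 * a) := by
  have hψ : star ![(Real.sin a : ℂ), (Real.cos a : ℂ)] = ![(Real.sin a : ℂ), (Real.cos a : ℂ)] := by
    ext i; fin_cases i <;> exact Complex.conj_ofReal _
  rw [hψ, rotationMatrix, Complex.cos_two_mul, Complex.sin_two_mul, Complex.ofReal_sin,
    Complex.ofReal_cos]
  ext i j
  fin_cases i <;> fin_cases j <;> simp [vecMulVec, Matrix.mul_apply, Fin.sum_univ_two]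
  · linear_combination (-2) * Complex.sin_sq_add_cos_sq (a : ℂ)
  all_goals ring

/-- **Eigenvalues and eigenstates of `G̃_k` (Appendix).**  For `ψ = (sin πθ, cos πθ)ᵀ`,
`Z = diag(1, -1)` and `G = (I - 2ψψ†) Z`, the unit vectors `v₊ = (1/√2)(1, i)ᵀ` and
`v₋ = (1/√2)(1, -i)ᵀ` satisfy `G v₊ = e^{2πiθ} v₊` and `G v₋ = e^{-2πiθ} v₋`. -/
theorem grover_iterate_eigenvectors (θ : ℝ) :
    (((1 : Matrix (Fin 2) (Fin 2) ℂ)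
          - (2 : ℂ) • Matrix.vecMulVec ![(Real.sin (π * θ) : ℂ), (Real.cos (π * θ) : ℂ)]
              (star ![(Real.sin (π * θ) : ℂ), (Real.cos (π * θ) : ℂ)]))
        * !![1, 0; 0, -1]).mulVec
        (((1 / Real.sqrt 2 : ℝ) : ℂ) • ![1, Complex.I])
      = Complex.exp (2 * π * θ * Complex.I) •
          (((1 / Real.sqrt 2 : ℝ) : ℂ) • ![1, Complex.I]) ∧
    (((1 : Matrix (Fin 2) (Fin 2) ℂ)
          - (2 : ℂ) • Matrix.vecMulVec ![(Real.sin (π * θ) : ℂ), (Real.cos (π * θ) : ℂ)]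
              (star ![(Real.sin (π * θ) : ℂ), (Real.cos (π * θ) : ℂ)]))
        * !![1, 0; 0, -1]).mulVec
        (((1 / Real.sqrt 2 : ℝ) : ℂ) • ![1, -Complex.I])
      = Complex.exp (-(2 * π * θ * Complex.I)) •
          (((1 / Real.sqrt 2 : ℝ) : ℂ) • ![1, -Complex.I]) := by
  have hangle : (2 * π * θ : ℂ) = 2 * ((π * θ : ℝ) : ℂ) := by push_cast; ring
  rw [reflection_mul_pauliZ, hangle, mulVec_smul, mulVec_smul, smul_comm (Complex.exp _),
    smul_comm (Complex.exp _), rotationMatrix_mulVec_one_I, rotationMatrix_mulVec_one_neg_I]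
  exact ⟨rfl, rfl⟩
end
end

section
/- Let N be a positive integer, let c ∈ EuclideanSpace ℂ (Fin N) be a unit vector with coordinates c_j, and let g : ℂ → ℝ satisfy −1 ≤ g(z) ≤ 1 for all z. Then the vector (1/√N) · Σ_j e_j ⊗ (g(c_j) · f_0 + √(1 − g(c_j)²) · f_1) in (EuclideanSpace ℂ (Fin N)) ⊗ ℂ² is a unit vector, the squared norm of its f_0-ancilla component equals (1/N) · Σ_j g(c_j)², and if Σ_j g(c_j)² > 0 the normalized f_0-component equals (Σ_j g(c_j)²)^{−1/2} · Σ_j g(c_j) · e_j ⊗ f_0. (This is the success probability and the nonlinearly transformed output state C'·Σ_j f(c_j)|j⟩ of Theorem 5 on nonlinear transformation of amplitudes.) -/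
open scoped BigOperators

noncomputable section

/-!
Since the `e_j ⊗ f_b` are orthonormal, `‖Σ_j e_j ⊗ x_j‖² = Σ_j ‖x_j‖²`. Each ancilla state
`g f₀ + √(1 - g²) f₁` is a unit vector, whence the first claim, and `‖g f₀‖ = |g|` gives the
second; the third holds because normalizing a vector is invariant under positive scaling.
-/

section TensorProduct

variable {ι κ : Type*} [Fintype ι] [Fintype κ]

lemma tp_smul_right (x : EuclideanSpace ℂ ι) (a : ℂ) (y : EuclideanSpace ℂ κ) :
    tp x (a • y) = a • tp x y := by
  ext p
  simp only [tp, WithLp.equiv_symm_apply, PiLp.smul_apply, smul_eq_mul]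
  ring

lemma sum_tp_single_apply [DecidableEq ι] (x : ι → EuclideanSpace ℂ κ) (p : ι × κ) :
    (∑ i, tp (EuclideanSpace.single i 1) (x i)) p = x p.1 p.2 := by
  simp [tp, WithLp.ofLp_sum, Finset.sum_apply]

lemma norm_sum_tp_single [DecidableEq ι] (x : ι → EuclideanSpace ℂ κ) :
    ‖∑ i, tp (EuclideanSpace.single i 1) (x i)‖ = √(∑ i, ‖x i‖ ^ 2) := by
  simp only [EuclideanSpace.norm_eq, sum_tp_single_apply, Fintype.sum_prod_type,
    Real.sq_sqrt (Finset.sum_nonneg fun _ _ => sq_nonneg _)]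

end TensorProduct

lemma norm_sq_smul_f_zero_add_smul_f_one (a b : ℂ) :
    ‖a • f 0 + b • f 1‖ ^ 2 = ‖a‖ ^ 2 + ‖b‖ ^ 2 := by
  simp [EuclideanSpace.norm_sq_eq, Fin.sum_univ_two, f]

lemma norm_sq_smul_f_zero_add_sqrt_smul_f_one {t : ℝ} (ht : t ^ 2 ≤ 1) :
    ‖(t : ℂ) • f 0 + ((√(1 - t ^ 2) : ℝ) : ℂ) • f 1‖ ^ 2 = 1 := by
  rw [norm_sq_smul_f_zero_add_smul_f_one, Complex.norm_real, Complex.norm_real,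
    Real.norm_eq_abs, Real.norm_eq_abs, sq_abs, sq_abs, Real.sq_sqrt (by linarith)]
  ring

theorem nonlinear_amplitude_transformation_general (N : ℕ) (hN : 0 < N)
    (c : EuclideanSpace ℂ (Fin N)) (g : ℂ → ℝ)
    (hg : ∀ z : ℂ, -1 ≤ g z ∧ g z ≤ 1) :
    ‖((1 / Real.sqrt N : ℝ) : ℂ) • ∑ j : Fin N,
        tp (e j) ((g (c j) : ℂ) • f 0 + ((Real.sqrt (1 - g (c j) ^ 2) : ℝ) : ℂ) • f 1)‖ = 1 ∧
    ‖((1 / Real.sqrt N : ℝ) : ℂ) • ∑ j : Fin N, (g (c j) : ℂ) • tp (e j) (f 0)‖ ^ 2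
      = (1 / N) * ∑ j : Fin N, g (c j) ^ 2 ∧
    (0 < ∑ j : Fin N, g (c j) ^ 2 →
      ‖((1 / Real.sqrt N : ℝ) : ℂ) • ∑ j : Fin N, (g (c j) : ℂ) • tp (e j) (f 0)‖⁻¹ •
          (((1 / Real.sqrt N : ℝ) : ℂ) • ∑ j : Fin N, (g (c j) : ℂ) • tp (e j) (f 0))
        = (((∑ j : Fin N, g (c j) ^ 2) ^ (-(1 / 2) : ℝ) : ℝ) : ℂ) •
            ∑ j : Fin N, (g (c j) : ℂ) • tp (e j) (f 0)) := by
  set S := ∑ j : Fin N, g (c j) ^ 2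
  set v := ∑ j : Fin N, (g (c j) : ℂ) • tp (e j) (f 0)
  have hN' : (0 : ℝ) < N := Nat.cast_pos.2 hN
  have hr : 0 < 1 / √(N : ℝ) := by positivity
  have norm_v : ‖v‖ = √S := by
    simp only [v, S, ← tp_smul_right, e, norm_sum_tp_single, norm_smul, f,
      PiLp.norm_single, norm_one, mul_one, Complex.norm_real, Real.norm_eq_abs, sq_abs]
  refine ⟨?_, ?_, fun hS => ?_⟩
  · have hsq j := norm_sq_smul_f_zero_add_sqrt_smul_f_one
      ((sq_le_one_iff_abs_le_one (g (c j))).2 (abs_le.2 (hg (c j))))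
    rw [norm_smul, Complex.norm_real, Real.norm_of_nonneg hr.le]
    simp only [e, norm_sum_tp_single, hsq, Finset.sum_const, Finset.card_univ, Fintype.card_fin,
      nsmul_eq_mul, mul_one]
    field_simp
  · rw [norm_smul, mul_pow, norm_v, Complex.norm_real, Real.norm_of_nonneg hr.le, div_pow,
      Real.sq_sqrt hN'.le, Real.sq_sqrt (Finset.sum_nonneg fun _ _ => sq_nonneg _)]
    ring
  · change NormedSpace.normalize _ = _
    rw [Complex.coe_smul, NormedSpace.normalize_smul_of_pos hr, NormedSpace.normalize, norm_v,
      ← Complex.coe_smul, Real.rpow_neg hS.le, ← Real.sqrt_eq_rpow]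

/-- **Nonlinear transformation of amplitudes (Theorem 5).**  For a unit vector `c` with
coordinates `c_j` and any `g : ℂ → ℝ` with `-1 ≤ g(z) ≤ 1`, the state
`(1/√N) Σ_j e_j ⊗ (g(c_j) f₀ + √(1 - g(c_j)²) f₁)` is a unit vector, the squared norm of
its `f₀`-ancilla component equals `(1/N) Σ_j g(c_j)²`, and whenever `Σ_j g(c_j)² > 0` the
normalized `f₀`-component equals `(Σ_j g(c_j)²)^(-1/2) Σ_j g(c_j) e_j ⊗ f₀`. -/
theorem nonlinear_amplitude_transformation (N : ℕ) (hN : 0 < N)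
    (c : EuclideanSpace ℂ (Fin N)) (hc : ‖c‖ = 1) (g : ℂ → ℝ)
    (hg : ∀ z : ℂ, -1 ≤ g z ∧ g z ≤ 1) :
    ‖((1 / Real.sqrt N : ℝ) : ℂ) • ∑ j : Fin N,
        tp (e j) ((g (c j) : ℂ) • f 0 + ((Real.sqrt (1 - g (c j) ^ 2) : ℝ) : ℂ) • f 1)‖ = 1 ∧
    ‖((1 / Real.sqrt N : ℝ) : ℂ) • ∑ j : Fin N, (g (c j) : ℂ) • tp (e j) (f 0)‖ ^ 2
      = (1 / N) * ∑ j : Fin N, g (c j) ^ 2 ∧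
    (0 < ∑ j : Fin N, g (c j) ^ 2 →
      ‖((1 / Real.sqrt N : ℝ) : ℂ) • ∑ j : Fin N, (g (c j) : ℂ) • tp (e j) (f 0)‖⁻¹ •
          (((1 / Real.sqrt N : ℝ) : ℂ) • ∑ j : Fin N, (g (c j) : ℂ) • tp (e j) (f 0))
        = (((∑ j : Fin N, g (c j) ^ 2) ^ (-(1 / 2) : ℝ) : ℝ) : ℂ) •
            ∑ j : Fin N, (g (c j) : ℂ) • tp (e j) (f 0)) :=
  nonlinear_amplitude_transformation_general N hN c g hg
end
end
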